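/- arXiv:1311.5027 — 3 statements merged into one kernel-verified Lean document; each statement's English description precedes it below -/
import Mathlib

section
/- Let G be a finite simple graph on n vertices and let k be an integer with 1 ≤ k ≤ n. Then there exists a partition of the edge set of G into the edge sets of fewer than 2^k·n/k complete bipartite subgraphs of G such that every vertex of G is contained in at most 2^(k−1) + ⌈n/k⌉ of these subgraphs. -/
/-- A complete bipartite subgraph of a simple graph `G`, determined by two disjoint
nonempty finsets `A`, `B` of vertices such that every pair `{a, b}` with `a ∈ A`,
`b ∈ B` is an edge of `G`. -/
structure CBSub {V : Type*} [DecidableEq V] (G : SimpleGraph V) where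
  A : Finset V
  B : Finset V
  nonemptyA : A.Nonempty
  nonemptyB : B.Nonempty
  disjointAB : Disjoint A B
  adj : ∀ a ∈ A, ∀ b ∈ B, G.Adj a b

namespace CBSub

variable {V : Type*} [DecidableEq V] {G : SimpleGraph V}

/-- The vertex set of a complete bipartite subgraph. -/
def verts (H : CBSub G) : Finset V := H.A ∪ H.B

/-- The edge set of a complete bipartite subgraph: all pairs `{a, b}` with
`a ∈ A`, `b ∈ B`. -/
def edges (H : CBSub G) : Finset (Sym2 V) := (H.A ×ˢ H.B).image fun ab => s(ab.1, ab.2)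

end CBSub

/-! Cut the ordered vertex set into blocks of `k` consecutive vertices, and label an edge
`uv` with `u < v` by the block `i` of `u` together with the set `S` of neighbours of `v` in
block `i` that precede `v`. The edges labelled `(i, S)` are exactly those of the complete
bipartite graph between `S` and the vertices whose earlier neighbourhood in block `i` is `S`,
so the labels index an edge partition into bicliques. A block of size at most `k` carries at
most `2^k - 1` labels, whence fewer than `2^k n / k` bicliques. A vertex `v` lies in `S` only
for sets `S` inside its own block containing `v`, at most `2^(k-1)` of them, and on the other
side of at most one biclique per block, at most `⌈n/k⌉` of them. -/

open Finset

namespace SimpleGraph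

variable {V ι : Type*} [Fintype V] [LinearOrder V] [DecidableEq ι]
  (G : SimpleGraph V) [DecidableRel G.Adj] (b : V → ι)

def lowerNeighborsIn (v : V) (i : ι) : Finset V := {u | G.Adj u v ∧ u < v ∧ b u = i}

def edgeLabel (u v : V) : ι × Finset V := (b u, G.lowerNeighborsIn b v (b u))

def edgeLabels : Finset (ι × Finset V) :=
  ({e : V × V | G.Adj e.1 e.2 ∧ e.1 < e.2} : Finset (V × V)).image fun e =>
    G.edgeLabel b e.1 e.2

variable {G b}

@[simp]
lemma mem_lowerNeighborsIn {u v : V} {i : ι} :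
    u ∈ G.lowerNeighborsIn b v i ↔ G.Adj u v ∧ u < v ∧ b u = i := by
  simp [lowerNeighborsIn]

lemma mem_lowerNeighborsIn_edgeLabel {u v : V} (huv : G.Adj u v) (hlt : u < v) :
    u ∈ (G.edgeLabel b u v).2 :=
  mem_lowerNeighborsIn.2 ⟨huv, hlt, rfl⟩

lemma mem_edgeLabels {p : ι × Finset V} :
    p ∈ G.edgeLabels b ↔ ∃ u v, G.Adj u v ∧ u < v ∧ G.edgeLabel b u v = p := by
  simp [edgeLabels, and_assoc]

lemma fst_eq_of_mem_edgeLabels {p : ι × Finset V} (hp : p ∈ G.edgeLabels b) {u : V}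
    (hu : u ∈ p.2) : b u = p.1 := by
  obtain ⟨x, y, -, -, rfl⟩ := mem_edgeLabels.1 hp
  exact (mem_lowerNeighborsIn.1 hu).2.2

lemma nonempty_snd_of_mem_edgeLabels {p : ι × Finset V} (hp : p ∈ G.edgeLabels b) :
    p.2.Nonempty := by
  obtain ⟨u, v, huv, hlt, rfl⟩ := mem_edgeLabels.1 hp
  exact ⟨u, mem_lowerNeighborsIn_edgeLabel huv hlt⟩

lemma fst_mem_image_of_mem_edgeLabels {p : ι × Finset V} (hp : p ∈ G.edgeLabels b) :
    p.1 ∈ univ.image b := by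
  obtain ⟨u, hu⟩ := nonempty_snd_of_mem_edgeLabels hp
  exact fst_eq_of_mem_edgeLabels hp hu ▸ mem_image_of_mem b (mem_univ u)

variable (G b) in
def labelBiclique (p : G.edgeLabels b) : CBSub G where
  A := p.1.2
  B := {v | G.lowerNeighborsIn b v p.1.1 = p.1.2}
  nonemptyA := nonempty_snd_of_mem_edgeLabels p.2
  nonemptyB := by
    obtain ⟨u, v, -, -, hp⟩ := mem_edgeLabels.1 p.2
    exact ⟨v, by simp [← hp, edgeLabel]⟩
  disjointAB := by
    refine disjoint_right.2 fun w hwB hwA => ?_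
    rw [← (mem_filter.1 hwB).2] at hwA
    exact lt_irrefl w (mem_lowerNeighborsIn.1 hwA).2.1
  adj a ha w hw := by
    rw [← (mem_filter.1 hw).2] at ha
    exact (mem_lowerNeighborsIn.1 ha).1

lemma mem_edges_labelBiclique_iff {p : G.edgeLabels b} {u v : V} (huv : G.Adj u v)
    (hlt : u < v) : s(u, v) ∈ (G.labelBiclique b p).edges ↔ p.1 = G.edgeLabel b u v := by
  constructor
  · simp only [CBSub.edges, labelBiclique, mem_image, mem_product, mem_filter, mem_univ,
      true_and, Sym2.eq_iff]
    rintro ⟨⟨x, y⟩, ⟨hx, hy⟩, ⟨rfl, rfl⟩ | ⟨rfl, rfl⟩⟩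
    · have hx' := mem_lowerNeighborsIn.1 (hy ▸ hx)
      rw [edgeLabel, hx'.2.2, hy]
    · exact absurd hlt (mem_lowerNeighborsIn.1 (hy ▸ hx)).2.1.not_gt
  · intro hp
    simp only [CBSub.edges, labelBiclique, hp, mem_image, mem_product, mem_filter, mem_univ,
      true_and]
    exact ⟨(u, v), ⟨mem_lowerNeighborsIn_edgeLabel huv hlt, rfl⟩, rfl⟩

lemma existsUnique_mem_edges_labelBiclique {e : Sym2 V} (he : e ∈ G.edgeSet) :
    ∃! p : G.edgeLabels b, e ∈ (G.labelBiclique b p).edges := by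
  induction e using Sym2.inductionOn with | _ u v => ?_
  wlog hlt : u < v generalizing u v
  · rw [Sym2.eq_swap]
    exact this v u (G.adj_symm he) ((le_of_not_gt hlt).lt_of_ne (G.ne_of_adj he).symm)
  have huv : G.Adj u v := he
  refine ⟨⟨G.edgeLabel b u v, mem_edgeLabels.2 ⟨u, v, huv, hlt, rfl⟩⟩,
    (mem_edges_labelBiclique_iff huv hlt).2 rfl, fun p hp => ?_⟩
  exact Subtype.ext ((mem_edges_labelBiclique_iff huv hlt).1 hp)

lemma card_filter_fst_edgeLabels_le (i : ι) :
    #{p ∈ G.edgeLabels b | p.1 = i} ≤ 2 ^ #{v | b v = i} - 1 :=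
  calc #{p ∈ G.edgeLabels b | p.1 = i}
      ≤ #(({v | b v = i} : Finset V).powerset.erase ∅) := by
        refine card_le_card_of_injOn Prod.snd (fun p hp => ?_) (fun p hp q hq h => ?_)
        · rw [mem_coe, mem_filter] at hp
          rw [mem_coe, mem_erase, mem_powerset]
          refine ⟨(nonempty_snd_of_mem_edgeLabels hp.1).ne_empty, fun u hu => ?_⟩
          simpa [hp.2] using fst_eq_of_mem_edgeLabels hp.1 hu
        · rw [mem_coe, mem_filter] at hp hq
          exact Prod.ext (hp.2.trans hq.2.symm) h
    _ = 2 ^ #{v | b v = i} - 1 := by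
        rw [card_erase_of_mem (empty_mem_powerset _), card_powerset]

lemma card_edgeLabels_le :
    #(G.edgeLabels b) ≤ ∑ i ∈ univ.image b, (2 ^ #{v | b v = i} - 1) := by
  rw [card_eq_sum_card_fiberwise fun p hp => fst_mem_image_of_mem_edgeLabels hp]
  exact sum_le_sum fun i _ => card_filter_fst_edgeLabels_le i

lemma card_filter_mem_snd_edgeLabels_le (v : V) :
    #{p ∈ G.edgeLabels b | v ∈ p.2} ≤ 2 ^ (#{u | b u = b v} - 1) := by
  have hsub : ∀ p ∈ G.edgeLabels b, v ∈ p.2 → p.2 ⊆ ({u | b u = b v} : Finset V) :=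
    fun p hp hv u hu => by simp [fst_eq_of_mem_edgeLabels hp hu, fst_eq_of_mem_edgeLabels hp hv]
  calc #{p ∈ G.edgeLabels b | v ∈ p.2}
      ≤ #(({u | b u = b v} : Finset V).erase v).powerset := by
        refine card_le_card_of_injOn (fun p => p.2.erase v) (fun p hp => ?_)
          (fun p hp q hq h => ?_)
        · rw [mem_coe, mem_filter] at hp
          exact mem_powerset.2 (erase_subset_erase v (hsub p hp.1 hp.2))
        · rw [mem_coe, mem_filter] at hp hq
          refine Prod.ext ?_ ?_
          · rw [← fst_eq_of_mem_edgeLabels hp.1 hp.2, fst_eq_of_mem_edgeLabels hq.1 hq.2]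
          · rw [← insert_erase hp.2, ← insert_erase hq.2]
            exact congrArg (insert v) h
    _ = 2 ^ (#{u | b u = b v} - 1) := by
        rw [card_powerset, card_erase_of_mem (by simp)]

lemma card_filter_lowerNeighborsIn_edgeLabels_le (v : V) :
    #{p ∈ G.edgeLabels b | G.lowerNeighborsIn b v p.1 = p.2} ≤ #(univ.image b) := by
  refine card_le_card_of_injOn Prod.fst (fun p hp => ?_) (fun p hp q hq h => ?_)
  · exact fst_mem_image_of_mem_edgeLabels (mem_filter.1 hp).1
  · rw [mem_coe, mem_filter] at hp hq
    exact Prod.ext h (by rw [← hp.2, ← hq.2, h])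

lemma card_filter_mem_verts_labelBiclique_le (v : V) :
    #{p : G.edgeLabels b | v ∈ (G.labelBiclique b p).verts} ≤
      2 ^ (#{u | b u = b v} - 1) + #(univ.image b) :=
  calc #{p : G.edgeLabels b | v ∈ (G.labelBiclique b p).verts}
      ≤ #({p ∈ G.edgeLabels b | v ∈ p.2} ∪
          {p ∈ G.edgeLabels b | G.lowerNeighborsIn b v p.1 = p.2}) := by
        refine card_le_card_of_injOn Subtype.val (fun p hp => ?_) Subtype.val_injective.injOn
        simpa [CBSub.verts, labelBiclique] using hp
    _ ≤ 2 ^ (#{u | b u = b v} - 1) + #(univ.image b) :=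
        (card_union_le _ _).trans (add_le_add (card_filter_mem_snd_edgeLabels_le v)
          (card_filter_lowerNeighborsIn_edgeLabels_le v))

variable (G b) in
theorem exists_biclique_partition : ∃ (M : ℕ) (f : Fin M → CBSub G),
    M ≤ ∑ i ∈ univ.image b, (2 ^ #{v | b v = i} - 1) ∧
    (∀ e ∈ G.edgeSet, ∃! j, e ∈ (f j).edges) ∧
    ∀ v, #{j | v ∈ (f j).verts} ≤ 2 ^ (#{u | b u = b v} - 1) + #(univ.image b) := by
  let e := (G.edgeLabels b).equivFin
  refine ⟨_, G.labelBiclique b ∘ e.symm, card_edgeLabels_le, fun x hx => ?_, fun v => ?_⟩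
  · exact e.symm.existsUnique_congr_right.2 (existsUnique_mem_edges_labelBiclique hx)
  · exact (card_equiv e.symm (by simp)).trans_le (card_filter_mem_verts_labelBiclique_le v)

end SimpleGraph

/- `(2^m - 1) / m`, the mean of `1, 2, …, 2^(m-1)`, is nondecreasing in `m`. -/
lemma two_pow_sub_one_mul_le {m k : ℕ} (h : m ≤ k) : (2 ^ m - 1) * k ≤ (2 ^ k - 1) * m := by
  induction k, h using Nat.le_induction with
  | base => rw [mul_comm]
  | succ k hmk ih =>
    have hmk' : 2 ^ m ≤ 2 ^ k := Nat.pow_le_pow_right two_pos hmk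
    rcases Nat.eq_zero_or_pos m with rfl | hm
    · simp
    · have h1 : 1 ≤ 2 ^ m := Nat.one_le_two_pow
      zify [h1, h1.trans hmk', Nat.one_le_two_pow (n := k + 1)] at ih ⊢
      push_cast [pow_succ] at ih ⊢
      nlinarith

lemma sum_two_pow_card_fiber_sub_one_mul_le {V ι : Type*} [Fintype V] [DecidableEq ι]
    (b : V → ι) {k : ℕ} (hb : ∀ i, #{v | b v = i} ≤ k) :
    (∑ i ∈ univ.image b, (2 ^ #{v | b v = i} - 1)) * k ≤ (2 ^ k - 1) * Fintype.card V :=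
  calc (∑ i ∈ univ.image b, (2 ^ #{v | b v = i} - 1)) * k
      = ∑ i ∈ univ.image b, (2 ^ #{v | b v = i} - 1) * k := sum_mul _ _ _
    _ ≤ ∑ i ∈ univ.image b, (2 ^ k - 1) * #{v | b v = i} :=
        sum_le_sum fun i _ => two_pow_sub_one_mul_le (hb i)
    _ = (2 ^ k - 1) * Fintype.card V := by rw [← mul_sum, ← card_eq_sum_card_image, card_univ]

lemma card_filter_div_eq_le {n k : ℕ} (hk : 0 < k) (i : ℕ) :
    #{v : Fin n | (v : ℕ) / k = i} ≤ k :=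
  calc #{v : Fin n | (v : ℕ) / k = i}
      ≤ #(range k) := by
        refine card_le_card_of_injOn (fun v => (v : ℕ) % k)
          (fun v _ => mem_range.2 (Nat.mod_lt _ hk)) fun v hv w hw h => Fin.ext ?_
        rw [mem_coe, mem_filter] at hv hw
        rw [← Nat.div_add_mod v k, ← Nat.div_add_mod w k, hv.2, hw.2]
        exact congrArg _ h
    _ = k := card_range k

lemma card_image_div_le_ceil {n k : ℕ} (hk : 0 < k) :
    #(univ.image fun v : Fin n => (v : ℕ) / k) ≤ ⌈(n : ℝ) / k⌉₊ :=
  calc #(univ.image fun v : Fin n => (v : ℕ) / k)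
      ≤ #(range ⌈(n : ℝ) / k⌉₊) := card_le_card fun i hi => by
        obtain ⟨v, -, rfl⟩ := mem_image.1 hi
        rw [mem_range, Nat.lt_ceil, lt_div_iff₀ (by positivity)]
        exact_mod_cast (Nat.div_mul_le_self v k).trans_lt v.isLt
    _ = ⌈(n : ℝ) / k⌉₊ := card_range _

/-- **Lemma (integer part).**  Let `G` be a graph on `n` vertices and `1 ≤ k ≤ n`.
There is a partition of the edge set of `G` into the edge sets of fewer than
`2^k · n / k` complete bipartite subgraphs of `G` such that every vertex is
contained in at most `2^(k-1) + ⌈n/k⌉` of these subgraphs. -/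
theorem lemma_k_integer (n k : ℕ) (hk1 : 1 ≤ k) (hkn : k ≤ n)
    (G : SimpleGraph (Fin n)) :
    ∃ (M : ℕ) (f : Fin M → CBSub G),
      ((M : ℝ) < 2 ^ k * n / k) ∧
      (∀ e ∈ G.edgeSet, ∃! i : Fin M, e ∈ (f i).edges) ∧
      ∀ v : Fin n,
        (Finset.univ.filter fun i : Fin M => v ∈ (f i).verts).card ≤
          2 ^ (k - 1) + ⌈(n : ℝ) / k⌉₊ := by
  classical
  have hk : 0 < k := hk1
  obtain ⟨M, f, hM, hpart, hverts⟩ := G.exists_biclique_partition fun v : Fin n => (v : ℕ) / k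
  refine ⟨M, f, ?_, hpart, fun v =>
    (hverts v).trans (add_le_add ?_ (card_image_div_le_ceil hk))⟩
  · have hMk : M * k < 2 ^ k * n :=
      calc M * k ≤ (2 ^ k - 1) * n := by
            simpa using (Nat.mul_le_mul_right k hM).trans
              (sum_two_pow_card_fiber_sub_one_mul_le _ (card_filter_div_eq_le hk))
        _ < 2 ^ k * n := Nat.mul_lt_mul_of_pos_right (Nat.sub_lt (by positivity) one_pos) (by omega)
    rw [lt_div_iff₀ (by positivity)]
    exact_mod_cast hMk
  · exact Nat.pow_le_pow_right two_pos (Nat.sub_le_sub_right (card_filter_div_eq_le hk _) 1)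
end

section
/- For every integer d ≥ 2 there exists n₀ such that for every n ≥ n₀ there is a d-uniform hypergraph H on n vertices whose fractional vertex CM-cover number satisfies vc*_CM(H) ≥ (0.53/d!)·n^(d−1)/log₂ n. -/
/-- A `(d,k)`-cuph (complete `d`-uniform `k`-partite hypergraph, for some `k`)
subhypergraph of the `d`-uniform hypergraph with vertex type `V` and edge set
`E`: its vertex set is partitioned into `k` nonempty pairwise disjoint parts,
its edges are exactly the `d`-element subsets of its vertex set meeting every
part in at most one vertex (hence meeting `d` of the parts, each in a single
vertex), and all of its edges belong to `E`. -/
structure CuphSub (V : Type*) [Fintype V] [DecidableEq V] (d : ℕ)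
    (E : Finset (Finset V)) where
  k : ℕ
  parts : Fin k → Finset V
  nonempty : ∀ i, (parts i).Nonempty
  disjoint : ∀ i j, i ≠ j → Disjoint (parts i) (parts j)
  sub : ∀ e : Finset V,
    (e.card = d ∧ e ⊆ Finset.univ.biUnion parts ∧ ∀ i, (e ∩ parts i).card ≤ 1) →
      e ∈ E

namespace CuphSub

variable {V : Type*} [Fintype V] [DecidableEq V] {d : ℕ} {E : Finset (Finset V)}

/-- The vertex set of a `(d,k)`-cuph subhypergraph. -/
def verts (C : CuphSub V d E) : Finset V := Finset.univ.biUnion C.parts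

/-- The edge set of a `(d,k)`-cuph subhypergraph. -/
def edges (C : CuphSub V d E) : Finset (Finset V) :=
  Finset.univ.filter fun e =>
    e.card = d ∧ e ⊆ C.verts ∧ ∀ i, (e ∩ C.parts i).card ≤ 1

/-- The density `|E|/|V|` of a `(d,k)`-cuph subhypergraph. -/
noncomputable def density (C : CuphSub V d E) : ℝ :=
  (C.edges.card : ℝ) / (C.verts.card : ℝ)

end CuphSub

/-!
Take a random `d`-uniform hypergraph on `n` vertices with edge probability `e⁻¹`. A cuph on a
vertex set `V` of size `m` is described by a labelling of `V` by its own elements (the parts are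
the fibres), so there are at most `C(n, m) · m ^ m ≤ (e n) ^ m` cuph shapes on `m` vertices, and
one with more than `(log n + 2) · m` edges survives with probability at most
`exp (-(log n + 2) m)`. Hence the expected number of such dense cuphs is `O(1)`, and deleting one
edge from each leaves a hypergraph `E` with `e⁻¹ C(n, d) - O(1)` edges all of whose cuphs have
density at most `log n + 2`. Double counting turns a fractional CM-cover into total load at least
`|E| / (log n + 2)`, so some vertex carries load `≳ e⁻¹ n ^ (d - 1) / (d! log n)`; the constant
works because `0.53 · log 2 < e⁻¹`.
-/

open Finset Real Filter Topology Asymptotics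

section Bernoulli

variable {α β : Type*}

/-- The probability of `E` for the random subset of `S` containing each element independently
with probability `p`. -/
noncomputable def bernoulliWeight (p : ℝ) (S E : Finset α) : ℝ :=
  p ^ #E * (1 - p) ^ (#S - #E)

theorem bernoulliWeight_pos {p : ℝ} (hp₀ : 0 < p) (hp₁ : p < 1) (S E : Finset α) :
    0 < bernoulliWeight p S E :=
  mul_pos (pow_pos hp₀ _) (pow_pos (sub_pos.2 hp₁) _)

theorem sum_bernoulliWeight (p : ℝ) (S : Finset α) :
    ∑ E ∈ S.powerset, bernoulliWeight p S E = 1 := by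
  simp [bernoulliWeight, sum_pow_mul_eq_add_pow]

theorem sum_bernoulliWeight_superset [DecidableEq α] (p : ℝ) {S T : Finset α} (hTS : T ⊆ S) :
    ∑ E ∈ S.powerset with T ⊆ E, bernoulliWeight p S E = p ^ #T := by
  have hfilter : {E ∈ S.powerset | T ⊆ E} = (S \ T).powerset.image (T ∪ ·) := by
    rw [← Icc_eq_image_powerset hTS]
    ext E
    simp [and_comm]
  have hinj : Set.InjOn (T ∪ ·) (S \ T).powerset := by
    intro F hF G hG hFG
    have hF' := disjoint_sdiff.mono_right (mem_powerset.1 hF)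
    have hG' := disjoint_sdiff.mono_right (mem_powerset.1 hG)
    simpa [union_sdiff_cancel_left hF', union_sdiff_cancel_left hG'] using
      congrArg (· \ T) hFG
  rw [hfilter, sum_image hinj]
  calc ∑ F ∈ (S \ T).powerset, bernoulliWeight p S (T ∪ F)
      = ∑ F ∈ (S \ T).powerset, p ^ #T * (p ^ #F * (1 - p) ^ (#(S \ T) - #F)) := by
        refine sum_congr rfl fun F hF => ?_
        have hF : F ⊆ S \ T := mem_powerset.1 hF
        rw [bernoulliWeight, card_union_of_disjoint (disjoint_sdiff.mono_right hF),
          card_sdiff_of_subset hTS, pow_add, Nat.sub_add_eq]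
        ring
    _ = p ^ #T := by rw [← mul_sum, sum_pow_mul_eq_add_pow]; simp

theorem sum_bernoulliWeight_mul_card_filter_subset [DecidableEq α] (p : ℝ) {S : Finset α}
    (B : Finset β) {T : β → Finset α} (hT : ∀ b ∈ B, T b ⊆ S) :
    ∑ E ∈ S.powerset, bernoulliWeight p S E * #{b ∈ B | T b ⊆ E} = ∑ b ∈ B, p ^ #(T b) := by
  simp_rw [card_filter, Nat.cast_sum, mul_sum]
  rw [sum_comm]
  refine sum_congr rfl fun b hb => ?_
  rw [← sum_bernoulliWeight_superset p (hT b hb), sum_filter]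
  exact sum_congr rfl fun E _ => by split_ifs <;> simp

theorem exists_subset_card_sub_card_filter_subset_ge [DecidableEq α] {p : ℝ} (hp₀ : 0 < p)
    (hp₁ : p < 1) (S : Finset α) (B : Finset β) {T : β → Finset α} (hT : ∀ b ∈ B, T b ⊆ S) :
    ∃ E ⊆ S, p * #S - ∑ b ∈ B, p ^ #(T b) ≤ (#E : ℝ) - #{b ∈ B | T b ⊆ E} := by
  have hcard : ∀ E ∈ S.powerset, #{e ∈ S | {e} ⊆ E} = #E := fun E hE => by
    simp [filter_mem_eq_inter, inter_eq_right.2 (mem_powerset.1 hE)]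
  have hmean : ∑ E ∈ S.powerset, bernoulliWeight p S E * ((#E : ℝ) - #{b ∈ B | T b ⊆ E})
      = p * #S - ∑ b ∈ B, p ^ #(T b) := by
    have hfirst : ∑ E ∈ S.powerset, bernoulliWeight p S E * (#E : ℝ) = p * #S := by
      rw [← sum_congr rfl fun E hE => by rw [← hcard E hE],
        sum_bernoulliWeight_mul_card_filter_subset p S fun e he => singleton_subset_iff.2 he]
      simp [mul_comm]
    simp_rw [mul_sub, sum_sub_distrib]
    rw [hfirst, sum_bernoulliWeight_mul_card_filter_subset p B hT]
  by_contra! hlt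
  have := sum_lt_sum_of_nonempty (powerset_nonempty S) fun E hE =>
    mul_lt_mul_of_pos_left (hlt E (mem_powerset.1 hE)) (bernoulliWeight_pos hp₀ hp₁ S E)
  rw [hmean, ← sum_mul, sum_bernoulliWeight, one_mul] at this
  exact this.false

theorem exists_subset_forall_not_subset [DecidableEq α] (B : Finset β) {T : β → Finset α}
    (hT : ∀ b ∈ B, (T b).Nonempty) (E : Finset α) :
    ∃ E' ⊆ E, #E ≤ #E' + #{b ∈ B | T b ⊆ E} ∧ ∀ b ∈ B, ¬ T b ⊆ E' := by
  rcases B.eq_empty_or_nonempty with rfl | ⟨b₀, hb₀⟩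
  · exact ⟨E, subset_rfl, by simp, by simp⟩
  have : Nonempty α := ⟨(hT b₀ hb₀).choose⟩
  choose! x hx using hT
  set H := {b ∈ B | T b ⊆ E}.image x
  refine ⟨E \ H, sdiff_subset, ?_, fun b hb hsub => ?_⟩
  · exact card_le_card_sdiff_add_card.trans (Nat.add_le_add_left card_image_le _)
  · have hbE : T b ⊆ E := hsub.trans sdiff_subset
    exact (mem_sdiff.1 (hsub (hx b hb))).2 (mem_image_of_mem x (mem_filter.2 ⟨hb, hbE⟩))

/-- The deletion method: take a random subset of `S` and remove one element of each `T b` it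
contains. -/
theorem exists_subset_forall_not_subset_of_bernoulli [DecidableEq α] {p : ℝ} (hp₀ : 0 < p)
    (hp₁ : p < 1) (S : Finset α) (B : Finset β) {T : β → Finset α} (hTS : ∀ b ∈ B, T b ⊆ S)
    (hT : ∀ b ∈ B, (T b).Nonempty) :
    ∃ E ⊆ S, p * #S - ∑ b ∈ B, p ^ #(T b) ≤ #E ∧ ∀ b ∈ B, ¬ T b ⊆ E := by
  obtain ⟨E, hES, hE⟩ := exists_subset_card_sub_card_filter_subset_ge hp₀ hp₁ S B hTS
  obtain ⟨E', hE'E, hcard, hE'⟩ := exists_subset_forall_not_subset B hT E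
  refine ⟨E', hE'E.trans hES, hE.trans ?_, hE'⟩
  rw [sub_le_iff_le_add]
  exact_mod_cast hcard

end Bernoulli

theorem sum_sum_filter_mem_eq {α ι : Type*} [Fintype ι] [DecidableEq α] (s : Finset α)
    {t : ι → Finset α} (ht : ∀ i, t i ⊆ s) (w : ι → ℝ) :
    ∑ a ∈ s, ∑ i with a ∈ t i, w i = ∑ i, #(t i) * w i := by
  rw [sum_comm' (t' := univ) (s' := t) fun a i => by
    simpa using fun h => ht i h]
  simp

theorem choose_mul_pow_self_le (n m : ℕ) : (n.choose m * m ^ m : ℝ) ≤ (exp 1 * n) ^ m := by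
  have hm : (m : ℝ) ^ m ≤ exp m * m.factorial :=
    (div_le_iff₀ (by positivity)).1 (pow_div_factorial_le_exp (m : ℝ) m.cast_nonneg m)
  calc (n.choose m * m ^ m : ℝ) ≤ n ^ m / m.factorial * (exp m * m.factorial) :=
        mul_le_mul (Nat.choose_le_pow_div m n) hm (by positivity) (by positivity)
    _ = (exp 1 * n) ^ m := by
        rw [← exp_one_pow, mul_pow]
        field_simp

section Labelling

variable {α : Type*} [Fintype α] [DecidableEq α]

/-- Cuphs on `V` are encoded by labellings of `V` by its own elements, the parts being the fibres
(`CuphSub.exists_labelling`); fixing the vertices outside `V` keeps their number at `#V ^ #V`. -/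
def labellings (V : Finset α) : Finset (α → α) :=
  Fintype.piFinset fun x => if x ∈ V then V else {x}

theorem card_labellings (V : Finset α) : #(labellings V) = #V ^ #V := by
  simp_rw [labellings, Fintype.card_piFinset, apply_ite card, card_singleton, prod_ite_mem,
    univ_inter, prod_const]

def labelledEdges (d : ℕ) (V : Finset α) (g : α → α) : Finset (Finset α) :=
  {e ∈ V.powersetCard d | #(e.image g) = #e}

theorem labelledEdges_subset_powersetCard (d : ℕ) (V : Finset α) (g : α → α) :
    labelledEdges d V g ⊆ univ.powersetCard d :=
  (filter_subset _ _).trans (powersetCard_mono (subset_univ V))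

theorem sum_card_labellings_mul_pow_le {r : ℝ} (hr₀ : 0 ≤ r)
    (hr : exp 1 * Fintype.card α * r < 1) :
    ∑ V : Finset α, (#(labellings V) : ℝ) * r ^ #V ≤ 1 / (1 - exp 1 * Fintype.card α * r) := by
  simp_rw [card_labellings, ← powerset_univ]
  rw [sum_powerset_apply_card (fun m => ((m ^ m : ℕ) : ℝ) * r ^ m), card_univ, range_eq_Ico]
  refine (sum_le_sum fun m _ => ?_).trans (geom_sum_Ico_le_of_lt_one (by positivity) hr)
  calc (Fintype.card α).choose m • (((m ^ m : ℕ) : ℝ) * r ^ m)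
      = ((Fintype.card α).choose m * m ^ m : ℝ) * r ^ m := by
        rw [nsmul_eq_mul]; push_cast; ring
    _ ≤ (exp 1 * Fintype.card α) ^ m * r ^ m := by
        gcongr; exact choose_mul_pow_self_le _ m
    _ = (exp 1 * Fintype.card α * r) ^ m := (mul_pow _ _ _).symm

end Labelling

namespace CuphSub

variable {α : Type*} [Fintype α] [DecidableEq α] {d : ℕ} {E : Finset (Finset α)}

theorem edges_subset (C : CuphSub α d E) : C.edges ⊆ E := fun e he =>
  C.sub e ((mem_filter.1 he).2)

theorem eq_of_mem_parts (C : CuphSub α d E) {x : α} {i j : Fin C.k} (hi : x ∈ C.parts i)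
    (hj : x ∈ C.parts j) : i = j := by
  by_contra h
  exact disjoint_left.1 (C.disjoint i j h) hi hj

/-- Label every vertex by a fixed representative of its part: the edges of `C` are then
exactly the `d`-sets of vertices with distinct labels. -/
theorem exists_labelling (C : CuphSub α d E) :
    ∃ g ∈ labellings C.verts, labelledEdges d C.verts g = C.edges := by
  choose r hr using C.nonempty
  let g : α → α := fun x => if h : ∃ i, x ∈ C.parts i then r h.choose else x
  have hg : ∀ {x i}, x ∈ C.parts i → g x = r i := fun {x i} hx => by
    have h : ∃ i, x ∈ C.parts i := ⟨i, hx⟩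
    simp only [g, dif_pos h, C.eq_of_mem_parts h.choose_spec hx]
  have hg_eq : ∀ {x y i j}, x ∈ C.parts i → y ∈ C.parts j → (g x = g y ↔ i = j) :=
    fun hx hy => by
      rw [hg hx, hg hy]
      exact ⟨fun h => C.eq_of_mem_parts (hr _) (h ▸ hr _), fun h => h ▸ rfl⟩
  have mem_verts : ∀ {x}, x ∈ C.verts ↔ ∃ i, x ∈ C.parts i := by simp [verts]
  refine ⟨g, Fintype.mem_piFinset.2 fun x => ?_, ?_⟩
  · split_ifs with hx
    · obtain ⟨i, hi⟩ := mem_verts.1 hx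
      exact hg hi ▸ mem_verts.2 ⟨i, hr i⟩
    · simp [g, dif_neg (mt mem_verts.2 hx)]
  ext e
  simp only [labelledEdges, edges, mem_filter, mem_powersetCard, mem_univ, true_and,
    card_image_iff]
  refine ⟨fun ⟨⟨heV, hed⟩, hinj⟩ => ⟨hed, heV, fun i => card_le_one.2 fun x hx y hy => ?_⟩,
    fun ⟨hed, heV, hle⟩ => ⟨⟨heV, hed⟩, fun x hx y hy hxy => ?_⟩⟩
  · rw [mem_inter] at hx hy
    exact hinj hx.1 hy.1 ((hg_eq hx.2 hy.2).2 rfl)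
  · obtain ⟨i, hi⟩ := mem_verts.1 (heV hx)
    obtain ⟨j, hj⟩ := mem_verts.1 (heV hy)
    obtain rfl := (hg_eq hi hj).1 hxy
    exact card_le_one.1 (hle i) x (mem_inter.2 ⟨hx, hi⟩) y (mem_inter.2 ⟨hy, hj⟩)

theorem card_le_mul_sum_load {D : ℝ}
    (hsparse : ∀ C : CuphSub α d E, (#C.edges : ℝ) ≤ D * #C.verts)
    {M : ℕ} (f : Fin M → CuphSub α d E) {w : Fin M → ℝ} (hw : ∀ i, 0 ≤ w i)
    (hcov : ∀ e ∈ E, 1 ≤ ∑ i with e ∈ (f i).edges, w i) :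
    (#E : ℝ) ≤ D * ∑ v, ∑ i with v ∈ (f i).verts, w i :=
  calc (#E : ℝ) = ∑ e ∈ E, 1 := by simp
    _ ≤ ∑ e ∈ E, ∑ i with e ∈ (f i).edges, w i := sum_le_sum hcov
    _ = ∑ i, #(f i).edges * w i := sum_sum_filter_mem_eq _ (fun i => (f i).edges_subset) w
    _ ≤ ∑ i, D * #(f i).verts * w i :=
        sum_le_sum fun i _ => mul_le_mul_of_nonneg_right (hsparse _) (hw i)
    _ = D * ∑ v, ∑ i with v ∈ (f i).verts, w i := by
        rw [sum_sum_filter_mem_eq _ (fun i => subset_univ _) w, mul_sum]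
        simp only [mul_assoc]

theorem exists_load_ge [Nonempty α] {D : ℝ} (hD : 0 ≤ D)
    (hsparse : ∀ C : CuphSub α d E, (#C.edges : ℝ) ≤ D * #C.verts)
    {M : ℕ} (f : Fin M → CuphSub α d E) {w : Fin M → ℝ} (hw : ∀ i, 0 ≤ w i)
    (hcov : ∀ e ∈ E, 1 ≤ ∑ i with e ∈ (f i).edges, w i) :
    ∃ v, (#E : ℝ) ≤ D * Fintype.card α * ∑ i with v ∈ (f i).verts, w i := by
  obtain ⟨v, -, hv⟩ := exists_max_image univ (fun v => ∑ i with v ∈ (f i).verts, w i)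
    univ_nonempty
  refine ⟨v, (card_le_mul_sum_load hsparse f hw hcov).trans ?_⟩
  rw [mul_assoc]
  gcongr
  simpa using sum_le_card_nsmul univ _ _ fun x _ => hv x (mem_univ x)

end CuphSub

section SparseCuphs

variable {α : Type*} [Fintype α] [DecidableEq α]

variable (α) in
noncomputable def denseLabellings (d : ℕ) (D : ℝ) : Finset (Σ _ : Finset α, α → α) :=
  (univ.sigma labellings).filter fun x => D * #x.1 < #(labelledEdges d x.1 x.2)

variable (α) in
theorem sum_denseLabellings_le_two [Nonempty α] (d : ℕ) :
    ∑ x ∈ denseLabellings α d (log (Fintype.card α) + 2),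
      exp (-1) ^ #(labelledEdges d x.1 x.2) ≤ 2 := by
  set n := Fintype.card α
  set D := log n + 2
  have hn : (0 : ℝ) < n := by exact_mod_cast Fintype.card_pos
  -- The summand `2` in `D` is there to make this ratio `e⁻¹ ≤ 1 / 2`.
  have hr : exp 1 * n * exp (-D) = exp (-1) := by
    rw [neg_add, exp_add, exp_neg (log n), exp_log hn]
    field_simp
    rw [← exp_add]
    norm_num
  have hexp : exp (-1) ≤ 1 / 2 := by
    rw [exp_neg, inv_le_comm₀ (exp_pos 1) (by norm_num)]
    linarith [add_one_le_exp 1]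
  calc ∑ x ∈ denseLabellings α d D, exp (-1) ^ #(labelledEdges d x.1 x.2)
      ≤ ∑ x ∈ denseLabellings α d D, exp (-D) ^ #x.1 := by
        refine sum_le_sum fun x hx => ?_
        rw [← exp_nat_mul, ← exp_nat_mul, exp_le_exp]
        linarith [(mem_filter.1 hx).2]
    _ ≤ ∑ x ∈ univ.sigma labellings, exp (-D) ^ #x.1 :=
        sum_le_sum_of_subset_of_nonneg (filter_subset _ _) fun _ _ _ => by positivity
    _ = ∑ V : Finset α, (#(labellings V) : ℝ) * exp (-D) ^ #V := by
        rw [sum_sigma]; simp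
    _ ≤ 1 / (1 - exp (-1)) := by
        rw [← hr]
        exact sum_card_labellings_mul_pow_le (exp_pos _).le (by rw [hr]; linarith)
    _ ≤ 2 := by rw [div_le_iff₀ (by linarith)]; linarith

theorem exists_uniform_sparse_cuphs [Nonempty α] (d : ℕ) :
    ∃ E : Finset (Finset α), (∀ e ∈ E, #e = d) ∧
      exp (-1) * (Fintype.card α).choose d - 2 ≤ #E ∧
      ∀ C : CuphSub α d E, (#C.edges : ℝ) ≤ (log (Fintype.card α) + 2) * #C.verts := by
  set D := log (Fintype.card α) + 2
  have hD : 0 ≤ D := by linarith [log_natCast_nonneg (Fintype.card α)]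
  have hTS : ∀ x ∈ denseLabellings α d D, labelledEdges d x.1 x.2 ⊆ univ.powersetCard d :=
    fun x _ => labelledEdges_subset_powersetCard d x.1 x.2
  have hT : ∀ x ∈ denseLabellings α d D, (labelledEdges d x.1 x.2).Nonempty := fun x hx =>
    card_pos.1 (by exact_mod_cast (by positivity : 0 ≤ D * #x.1).trans_lt (mem_filter.1 hx).2)
  obtain ⟨E, hES, hcard, hE⟩ := exists_subset_forall_not_subset_of_bernoulli (exp_pos (-1))
    (exp_lt_one_iff.2 (by norm_num)) _ _ hTS hT
  refine ⟨E, fun e he => (mem_powersetCard.1 (hES he)).2, ?_, fun C => ?_⟩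
  · rw [card_powersetCard, card_univ] at hcard
    linarith [sum_denseLabellings_le_two α d]
  · obtain ⟨g, hg, hgC⟩ := C.exists_labelling
    by_contra! hdense
    refine hE ⟨C.verts, g⟩ (mem_filter.2 ⟨mem_sigma.2 ⟨mem_univ _, hg⟩, ?_⟩) ?_
    · rwa [hgC]
    · exact hgC ▸ C.edges_subset

end SparseCuphs

theorem eventually_le_exp_neg_one_mul_choose_sub (d : ℕ) (hd : d ≠ 0) :
    ∀ᶠ n : ℕ in atTop, 0.53 / d.factorial * (n : ℝ) ^ (d - 1) / logb 2 n * ((log n + 2) * n) ≤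
      exp (-1) * n.choose d - 2 := by
  set q : ℕ → ℝ := fun n => (n : ℝ) ^ d / d.factorial
  have hconst : 0.53 * log 2 < exp (-1) := by
    rw [exp_neg, ← one_div, lt_div_iff₀ (exp_pos 1)]
    nlinarith [log_two_lt_d9, exp_one_lt_d9, log_pos one_lt_two, exp_pos 1]
  have hlog : Tendsto (fun n : ℕ => log n) atTop atTop :=
    tendsto_log_atTop.comp tendsto_natCast_atTop_atTop
  have hq : Tendsto q atTop atTop :=
    ((tendsto_pow_atTop hd).comp tendsto_natCast_atTop_atTop).atTop_div_const (by positivity)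
  have hlhs : Tendsto (fun n : ℕ => 0.53 * log 2 * (1 + 2 / log n)) atTop
      (𝓝 (0.53 * log 2)) := by
    simpa using ((tendsto_const_nhds.div_atTop hlog).const_add 1).const_mul (0.53 * log 2)
  have hchoose : Tendsto (fun n : ℕ => n.choose d / q n) atTop (𝓝 1) :=
    (isEquivalent_iff_tendsto_one (hq.eventually_gt_atTop 0 |>.mono fun _ h => h.ne')).1
      (isEquivalent_choose d)
  have hrhs : Tendsto (fun n : ℕ => exp (-1) * (n.choose d / q n) - 2 / q n) atTop
      (𝓝 (exp (-1))) := by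
    simpa using (hchoose.const_mul (exp (-1))).sub (tendsto_const_nhds.div_atTop hq)
  filter_upwards [hlhs.eventually_lt hrhs hconst, eventually_gt_atTop 1] with n hlt hn
  have hqn : 0 < q n := by positivity
  have hL : 0 < log n := log_pos (by exact_mod_cast hn)
  calc 0.53 / d.factorial * (n : ℝ) ^ (d - 1) / logb 2 n * ((log n + 2) * n)
      = q n * (0.53 * log 2 * (1 + 2 / log n)) := by
        simp only [q, logb]
        rw [← pow_sub_one_mul hd (n : ℝ)]
        field_simp
    _ ≤ q n * (exp (-1) * (n.choose d / q n) - 2 / q n) := by gcongr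
    _ = exp (-1) * n.choose d - 2 := by field_simp

/-- **Random hypergraphs are hard to cover.**  For every `d ≥ 2` there is `n₀`
such that for every `n ≥ n₀` there is a `d`-uniform hypergraph `H` on `n`
vertices whose fractional vertex CM-cover number satisfies
`vc*_CM(H) ≥ (0.53/d!) · n^(d-1) / log₂ n`; i.e. every fractional CM-cover of
`H` (nonnegative weights on `(d,k)`-cuph subhypergraphs giving every edge total
weight at least `1`) has a vertex of load at least
`(0.53/d!) · n^(d-1) / log₂ n`. -/
theorem exists_hypergraph_large_fractional_cover_number (d : ℕ) (hd : 2 ≤ d) :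
    ∃ n₀ : ℕ, ∀ n : ℕ, n₀ ≤ n →
      ∃ E : Finset (Finset (Fin n)), (∀ e ∈ E, e.card = d) ∧
        ∀ (M : ℕ) (f : Fin M → CuphSub (Fin n) d E) (w : Fin M → ℝ),
          (∀ i, 0 ≤ w i) →
          (∀ e ∈ E,
            1 ≤ ∑ i ∈ Finset.univ.filter (fun i : Fin M => e ∈ (f i).edges), w i) →
          ∃ v : Fin n,
            (0.53 / d.factorial) * n ^ (d - 1) / Real.logb 2 n ≤
              ∑ i ∈ Finset.univ.filter (fun i : Fin M => v ∈ (f i).verts), w i := by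
  obtain ⟨n₀, hn₀⟩ := eventually_atTop.1
    ((eventually_le_exp_neg_one_mul_choose_sub d (by omega)).and (eventually_gt_atTop 0))
  refine ⟨n₀, fun n hn => ?_⟩
  obtain ⟨hbound, hn⟩ := hn₀ n hn
  have : NeZero n := ⟨hn.ne'⟩
  obtain ⟨E, hEd, hEcard, hsparse⟩ := exists_uniform_sparse_cuphs (α := Fin n) d
  rw [Fintype.card_fin] at hEcard hsparse
  have hD : 0 < log n + 2 := by linarith [log_natCast_nonneg n]
  refine ⟨E, hEd, fun M f w hw hcov => ?_⟩
  obtain ⟨v, hv⟩ := CuphSub.exists_load_ge hD.le hsparse f hw hcov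
  rw [Fintype.card_fin] at hv
  refine ⟨v, le_of_mul_le_mul_right ?_ (by positivity : (0 : ℝ) < (log n + 2) * n)⟩
  linarith
end

section
/- Let G = (V,E) be a finite simple graph on n vertices in which every vertex has degree at least n − m, and let 0 < p < 1. Construct a random complete bipartite subgraph H of G as follows: include each vertex of G in a set A independently with probability p; let B₀ be the set of vertices in V \ A adjacent to all vertices of A; include each v ∈ B₀ in a set B independently with probability (1−p)^(d_v − n + m), where d_v is the degree of v in G; and let H be the complete bipartite graph with partite sets A and B. Then for every edge {u,v} of G, the probability that {u,v} is an edge of H (i.e., that one endpoint lies in A and the other in B) equals 2p(1−p)^m, and for every vertex v of G, the probability that v ∈ A ∪ B equals p + (1−p)^m. -/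
open MeasureTheory

/-- The Bernoulli measure on `Bool` with parameter `p` (truncated into `[0,1]`;
for `0 ≤ p ≤ 1` this is the genuine Bernoulli(`p`) distribution: `true` has
probability `p` and `false` has probability `1 - p`). -/
noncomputable def bernoulliMeasure (p : ℝ) : Measure Bool :=
  (PMF.bernoulli (min (Real.toNNReal p) 1) (min_le_right _ _)).toMeasure

/-- The sample space for the random complete bipartite subgraph construction: each
vertex `v` independently receives a pair of random bits, the first deciding
membership in `A` (probability `p`), the second deciding membership in `B` given
`v ∈ B₀` (probability `(1-p)^(d_v - n + m)`). -/
noncomputable def constructionMeasure (n m : ℕ) (G : SimpleGraph (Fin n))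
    [DecidableRel G.Adj] (p : ℝ) : Measure (Fin n → Bool × Bool) :=
  Measure.pi fun v =>
    (bernoulliMeasure p).prod (bernoulliMeasure ((1 - p) ^ (G.degree v + m - n)))

/-- The random set `A`: each vertex is included independently with probability `p`. -/
def setA {n : ℕ} (ω : Fin n → Bool × Bool) : Set (Fin n) := {v | (ω v).1 = true}

/-- The set `B₀` of vertices outside `A` adjacent to all vertices of `A`. -/
def setB0 {n : ℕ} (G : SimpleGraph (Fin n)) (ω : Fin n → Bool × Bool) :
    Set (Fin n) :=
  {v | v ∉ setA ω ∧ ∀ u ∈ setA ω, G.Adj u v}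

/-- The random set `B`: each `v ∈ B₀` is included independently with probability
`(1-p)^(d_v - n + m)`. -/
def setB {n : ℕ} (G : SimpleGraph (Fin n)) (ω : Fin n → Bool × Bool) :
    Set (Fin n) :=
  {v | v ∈ setB0 G ω ∧ (ω v).2 = true}

/-! For a set `I` of neighbours of `v`, the event `↑I ⊆ A ∧ v ∈ B` is a cylinder event: it asks
for `w ∈ A` when `w ∈ I`, for `w ∉ A` when `w` is a non-neighbour of `v` (`v` included), and for
the second bit at `v`. Its probability is `p ^ |I| * (1 - p) ^ (n - d_v) * (1 - p) ^ (d_v - n + m)`,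
where the selection probability of `B` exactly cancels the dependence on `d_v`, leaving
`p ^ |I| * (1 - p) ^ m`. Both claims follow by splitting into disjoint events of this form with
`I = {u}` and `I = ∅`, together with `P(v ∈ A) = p`. -/

open Finset

instance (p : ℝ) : IsProbabilityMeasure (bernoulliMeasure p) :=
  PMF.toMeasure.isProbabilityMeasure _

section Bernoulli

variable {p : ℝ}

lemma bernoulliMeasure_singleton_true (hp1 : p ≤ 1) :
    bernoulliMeasure p {true} = ENNReal.ofReal p := by
  rw [bernoulliMeasure, PMF.toMeasure_apply_singleton _ _ (measurableSet_singleton _),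
    PMF.bernoulli_apply, min_eq_left (Real.toNNReal_le_one.mpr hp1)]
  rfl

lemma bernoulliMeasure_singleton_false (hp0 : 0 ≤ p) (hp1 : p ≤ 1) :
    bernoulliMeasure p {false} = ENNReal.ofReal (1 - p) := by
  rw [bernoulliMeasure, PMF.toMeasure_apply_singleton _ _ (measurableSet_singleton _),
    PMF.bernoulli_apply, min_eq_left (Real.toNNReal_le_one.mpr hp1)]
  simp only [cond_false, ENNReal.coe_sub, ENNReal.coe_one]
  rw [ENNReal.ofReal_sub _ hp0, ENNReal.ofReal_one]
  rfl

lemma bernoulliMeasure_prod_setOf (hp0 : 0 ≤ p) (hp1 : p ≤ 1) {q : ℝ} (hq1 : q ≤ 1)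
    (P Q R : Prop) [Decidable P] [Decidable Q] [Decidable R] (hPQ : ¬(P ∧ Q)) :
    (bernoulliMeasure p).prod (bernoulliMeasure q)
        {b | (P → b.1 = true) ∧ (Q → b.1 = false) ∧ (R → b.2 = true)} =
      (if P then ENNReal.ofReal p else 1) * (if Q then ENNReal.ofReal (1 - p) else 1) *
        (if R then ENNReal.ofReal q else 1) := by
  have hprod : {b : Bool × Bool | (P → b.1 = true) ∧ (Q → b.1 = false) ∧ (R → b.2 = true)} =
      {a | (P → a = true) ∧ (Q → a = false)} ×ˢ {b | R → b = true} := by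
    ext; simp [and_assoc]
  rw [hprod, Measure.prod_prod]
  by_cases hP : P <;> by_cases hQ : Q
  · exact absurd ⟨hP, hQ⟩ hPQ
  all_goals by_cases hR : R <;>
    simp [hP, hQ, hR, bernoulliMeasure_singleton_true, bernoulliMeasure_singleton_false,
      hp0, hp1, hq1, -Bool.univ_eq]

end Bernoulli

variable {n : ℕ} {G : SimpleGraph (Fin n)}

lemma mem_setB_iff {ω : Fin n → Bool × Bool} {v : Fin n} :
    v ∈ setB G ω ↔ (∀ w, ¬G.Adj v w → (ω w).1 = false) ∧ (ω v).2 = true := by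
  simp only [setB, setB0, setA, Set.mem_setOf]
  constructor
  · rintro ⟨⟨-, hadj⟩, hv⟩
    exact ⟨fun w hvw => by simpa using mt (hadj w) (mt SimpleGraph.Adj.symm hvw), hv⟩
  · rintro ⟨hnonadj, hv⟩
    refine ⟨⟨by simp [hnonadj v (G.irrefl)], fun u hu => ?_⟩, hv⟩
    by_contra h
    simp [hnonadj u (mt SimpleGraph.Adj.symm h)] at hu

lemma setOf_subset_setA_and_mem_setB (I : Finset (Fin n)) (v : Fin n) :
    {ω | ↑I ⊆ setA ω ∧ v ∈ setB G ω} = Set.univ.pi fun w =>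
      {b | (w ∈ I → b.1 = true) ∧ (¬G.Adj v w → b.1 = false) ∧ (w = v → b.2 = true)} := by
  ext ω
  simp only [Set.mem_setOf, Set.mem_pi, Set.mem_univ, true_implies, forall_and, forall_eq,
    mem_setB_iff, setA, Set.subset_def, Finset.mem_coe]

lemma card_filter_not_adj [DecidableRel G.Adj] (v : Fin n) :
    #{w | ¬G.Adj v w} = n - G.degree v := by
  have := card_filter_add_card_filter_not (s := univ) (G.Adj v)
  rw [← SimpleGraph.neighborFinset_eq_filter, SimpleGraph.card_neighborFinset_eq_degree,
    card_univ, Fintype.card_fin] at this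
  omega

lemma constructionMeasure_subset_setA_and_mem_setB [DecidableRel G.Adj] {m : ℕ} {v : Fin n}
    (hv : n ≤ G.degree v + m) {p : ℝ} (hp0 : 0 ≤ p) (hp1 : p ≤ 1) {I : Finset (Fin n)}
    (hI : I ⊆ G.neighborFinset v) :
    constructionMeasure n m G p {ω | ↑I ⊆ setA ω ∧ v ∈ setB G ω} =
      ENNReal.ofReal (p ^ #I * (1 - p) ^ m) := by
  have h1p : 0 ≤ 1 - p := by linarith
  have hfactor (w : Fin n) :
      (bernoulliMeasure p).prod (bernoulliMeasure ((1 - p) ^ (G.degree w + m - n)))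
          {b | (w ∈ I → b.1 = true) ∧ (¬G.Adj v w → b.1 = false) ∧ (w = v → b.2 = true)} =
        (if w ∈ I then ENNReal.ofReal p else 1) *
          (if ¬G.Adj v w then ENNReal.ofReal (1 - p) else 1) *
          (if w = v then ENNReal.ofReal ((1 - p) ^ (G.degree w + m - n)) else 1) :=
    bernoulliMeasure_prod_setOf hp0 hp1 (pow_le_one₀ h1p (by linarith)) _ _ _
      fun h => h.2 (by simpa using hI h.1)
  have hexp : n - G.degree v + (G.degree v + m - n) = m := by
    have := G.degree_lt_card_verts v
    rw [Fintype.card_fin] at this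
    omega
  rw [setOf_subset_setA_and_mem_setB, constructionMeasure, Measure.pi_pi]
  simp_rw [hfactor, prod_mul_distrib, prod_ite_mem, prod_ite_eq', ← prod_filter, prod_const,
    univ_inter, card_filter_not_adj, mem_univ, if_true]
  rw [ENNReal.ofReal_mul (by positivity), ENNReal.ofReal_pow hp0, ENNReal.ofReal_pow h1p,
    ENNReal.ofReal_pow h1p, mul_assoc, ← pow_add, hexp]

lemma notMem_setA_of_mem_setB {ω : Fin n → Bool × Bool} {v : Fin n} (h : v ∈ setB G ω) :
    v ∉ setA ω :=
  h.1.1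

section constructionMeasure

variable [DecidableRel G.Adj] {m : ℕ} {p : ℝ}

lemma constructionMeasure_mem_setA (hp1 : p ≤ 1) (v : Fin n) :
    constructionMeasure n m G p {ω | v ∈ setA ω} = ENNReal.ofReal p := by
  have hA : {ω : Fin n → Bool × Bool | v ∈ setA ω} =
      Function.eval v ⁻¹' ({true} ×ˢ Set.univ) := by
    ext; simp [setA]
  rw [hA, constructionMeasure, (measurePreserving_eval _ v).measure_preimage
    (Set.toFinite _).measurableSet.nullMeasurableSet, Measure.prod_prod,
    bernoulliMeasure_singleton_true hp1, measure_univ, mul_one]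

lemma constructionMeasure_mem_setB {v : Fin n} (hv : n ≤ G.degree v + m) (hp0 : 0 ≤ p)
    (hp1 : p ≤ 1) :
    constructionMeasure n m G p {ω | v ∈ setB G ω} = ENNReal.ofReal ((1 - p) ^ m) := by
  simpa using constructionMeasure_subset_setA_and_mem_setB hv hp0 hp1 (empty_subset _)

lemma constructionMeasure_mem_setA_and_mem_setB {u v : Fin n} (hv : n ≤ G.degree v + m)
    (hp0 : 0 ≤ p) (hp1 : p ≤ 1) (huv : G.Adj u v) :
    constructionMeasure n m G p {ω | u ∈ setA ω ∧ v ∈ setB G ω} =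
      ENNReal.ofReal (p * (1 - p) ^ m) := by
  simpa using constructionMeasure_subset_setA_and_mem_setB hv hp0 hp1
    (I := {u}) (by simpa using huv.symm)

end constructionMeasure

/-- **The random complete bipartite subgraph of a very dense graph.**  Let `G` be
a graph on `n` vertices of minimum degree at least `n - m` (stated as
`n ≤ deg v + m`) and let `0 < p < 1`.  In the random construction above (each
vertex lies in `A` with probability `p`; each vertex `v` of `B₀` lies in `B` with
probability `(1-p)^(d_v - n + m)`, all independently; `H` is the complete
bipartite graph with partite sets `A` and `B`), every edge `{u,v}` of `G` is an
edge of `H` — i.e. has one endpoint in `A` and the other in `B` — with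
probability exactly `2p(1-p)^m`, and every vertex `v` of `G` lies in `A ∪ B` with
probability exactly `p + (1-p)^m`. -/
theorem random_bipartite_subgraph (n m : ℕ) (G : SimpleGraph (Fin n))
    [DecidableRel G.Adj] (hdeg : ∀ v : Fin n, n ≤ G.degree v + m)
    (p : ℝ) (hp0 : 0 < p) (hp1 : p < 1) :
    (∀ u v : Fin n, G.Adj u v →
      constructionMeasure n m G p
          {ω | (u ∈ setA ω ∧ v ∈ setB G ω) ∨ (v ∈ setA ω ∧ u ∈ setB G ω)} =
        ENNReal.ofReal (2 * p * (1 - p) ^ m)) ∧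
    (∀ v : Fin n,
      constructionMeasure n m G p {ω | v ∈ setA ω ∨ v ∈ setB G ω} =
        ENNReal.ofReal (p + (1 - p) ^ m)) := by
  have hmeas (s : Set (Fin n → Bool × Bool)) : MeasurableSet s := s.toFinite.measurableSet
  refine ⟨fun u v huv => ?_, fun v => ?_⟩
  · have hdisj : Disjoint {ω | u ∈ setA ω ∧ v ∈ setB G ω} {ω | v ∈ setA ω ∧ u ∈ setB G ω} :=
      Set.disjoint_left.2 fun _ h h' => notMem_setA_of_mem_setB h'.2 h.1
    rw [Set.setOf_or, measure_union hdisj (hmeas _),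
      constructionMeasure_mem_setA_and_mem_setB (hdeg v) hp0.le hp1.le huv,
      constructionMeasure_mem_setA_and_mem_setB (hdeg u) hp0.le hp1.le huv.symm,
      ← ENNReal.ofReal_add (by positivity) (by positivity), ← two_mul, mul_assoc]
  · have hdisj : Disjoint {ω | v ∈ setA ω} {ω | v ∈ setB G ω} :=
      Set.disjoint_left.2 fun _ h h' => notMem_setA_of_mem_setB h' h
    rw [Set.setOf_or, measure_union hdisj (hmeas _), constructionMeasure_mem_setA hp1.le,
      constructionMeasure_mem_setB (hdeg v) hp0.le hp1.le,
      ← ENNReal.ofReal_add hp0.le (by positivity)]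
end
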